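/- arXiv:2205.07317 — 3 statements merged into one kernel-verified Lean document; each statement's English description precedes it below -/
import Mathlib

section
/- Let (f_n) be the Fibonacci sequence with f_0 = f_1 = 1. In the tree generated by the substitution rules Y → YBG, G → YBG, O → YBO, B → BO, rooted at a non-B node, the number N_B(m) of B-nodes at level m and the number N_{nonB}(m) of non-B nodes at level m satisfy: N_B(m+1) = N_B(m) + N_{nonB}(m), N_{nonB}(m+1) = N_B(m) + 2·N_{nonB}(m), and N_B(m) + N_{nonB}(m) = f_{2m+1}. -/
/-- Fibonacci sequence with f 0 = f 1 = 1. -/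
def f (n : ℕ) : ℕ := Nat.fib (n + 1)

/-- In the tree generated by Y → YBG, G → YBG, O → YBO, B → BO rooted at a
non-B node, the counts NB of B-nodes and NnonB of non-B nodes at level m
satisfy the stated recurrences and NB m + NnonB m = f (2m+1). -/
theorem b_nonb_counts (NB NnonB : ℕ → ℕ)
    (hB0 : NB 0 = 0) (hn0 : NnonB 0 = 1)
    (hB : ∀ m, NB (m + 1) = NB m + NnonB m)
    (hn : ∀ m, NnonB (m + 1) = NB m + 2 * NnonB m) :
    ∀ m, NB m + NnonB m = f (2 * m + 1) := by
  have key : ∀ m, NB m = Nat.fib (2 * m) ∧ NnonB m = Nat.fib (2 * m + 1) := by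
    intro m
    induction m with
    | zero => simp [hB0, hn0]
    | succ k ih =>
      obtain ⟨h1, h2⟩ := ih
      constructor
      · rw [hB, h1, h2]
        have : 2 * (k + 1) = (2 * k) + 2 := by ring
        rw [this, Nat.fib_add_two]
      · rw [hn, h1, h2]
        have : 2 * (k + 1) + 1 = (2 * k + 1) + 2 := by ring
        rw [this, Nat.fib_add_two]
        have : 2 * k + 1 + 1 = 2 * k + 2 := rfl
        rw [this, Nat.fib_add_two]
        ring
  intro m
  obtain ⟨h1, h2⟩ := key m
  rw [h1, h2, f]
  have : 2 * m + 1 + 1 = 2 * m + 2 := rfl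
  rw [this, Nat.fib_add_two]
end

section
/- Let μ(n,m) = (m+1)·2^(n+1) − 1. For every n ≥ 1 and every m, the set of generations k < n such that μ(n,m) is the mid-point abscissa of some trilateral of generation k equals all of {0, 1, ..., n−1}; that is, for each k ≤ n there exists m' with μ(n,m) = μ(k,m'). -/
/-- Mid-point abscissa of the m-th trilateral of generation n. -/
def mu (n m : ℕ) : ℕ := (m + 1) * 2 ^ (n + 1) - 1

theorem midpoint_all_lower_generations (n m : ℕ) (hn : 1 ≤ n) :
    ∀ k ≤ n, ∃ m', mu n m = mu k m' := by
  intro k hk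
  refine ⟨(m + 1) * 2 ^ (n - k) - 1, ?_⟩
  have h1 : 1 ≤ (m + 1) * 2 ^ (n - k) :=
    Nat.one_le_iff_ne_zero.mpr (by positivity)
  unfold mu
  rw [Nat.sub_add_cancel h1, mul_assoc, ← pow_add]
  have h2 : n - k + (k + 1) = n + 1 := by omega
  rw [h2]
end

section
/- Let ξ(n,m) = 2^n − 1 + m·2^(n+1), T(n,k) = [ξ(n,k), ξ(n,k)+2^(n+1)] and T(n+1,m) = [ξ(n+1,m), ξ(n+1,m)+2^(n+2)]. Then for each m there are exactly two values of k such that T(n,k) ⊄ T(n+1,m) and T(n,k) ∩ T(n+1,m) has positive length, and for those k the intersection has length 2^n. -/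
open MeasureTheory

/-- Vertex abscissa of the m-th trilateral of generation n. -/
def xi (n m : ℕ) : ℕ := 2 ^ n - 1 + m * 2 ^ (n + 1)

/-- Latitude interval of the m-th trilateral of generation n. -/
def T (n m : ℕ) : Set ℝ := Set.Icc (xi n m : ℝ) ((xi n m : ℝ) + 2 ^ (n + 1))

lemma xi_cast (n m : ℕ) : (xi n m : ℝ) = 2 ^ n - 1 + m * 2 ^ (n + 1) := by
  have h : 1 ≤ 2 ^ n := Nat.one_le_two_pow
  unfold xi
  push_cast [Nat.cast_sub h]
  ring

lemma mem_key (n m k : ℕ) :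
    (¬ T n k ⊆ T (n + 1) m ∧
      (interior (T n k) ∩ interior (T (n + 1) m)).Nonempty) ↔
    (k = 2 * m ∨ k = 2 * m + 2) := by
  have hc : (0:ℝ) < 2 ^ n := by positivity
  have hle : (xi n k : ℝ) ≤ (xi n k : ℝ) + 2 ^ (n + 1) := by
    have : (0:ℝ) < 2 ^ (n+1) := by positivity
    linarith
  rw [T, T, interior_Icc, interior_Icc, Set.Ioo_inter_Ioo, Set.nonempty_Ioo,
    Set.Icc_subset_Icc_iff hle, xi_cast, xi_cast, max_lt_iff, lt_min_iff, lt_min_iff]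
  have e1 : (2:ℝ) ^ (n+1) = 2 * 2 ^ n := by ring
  have e2 : (2:ℝ) ^ (n+1+1) = 4 * 2 ^ n := by ring
  constructor
  · rintro ⟨h1, h2⟩
    rw [e1, e2] at h1 h2
    have hA : (2 * k : ℝ) < 4 * m + 5 := by nlinarith [h2.1.2]
    have hB : (4 * m : ℝ) < 2 * k + 1 := by nlinarith [h2.2.1]
    have hA' : 2 * k < 4 * m + 5 := by exact_mod_cast hA
    have hB' : 4 * m < 2 * k + 1 := by exact_mod_cast hB
    by_contra hk
    push_neg at hk
    have hk1 : k = 2 * m + 1 := by omega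
    subst hk1
    apply h1
    push_cast
    constructor <;> nlinarith
  · rintro (rfl | rfl) <;>
    · constructor
      · intro h
        rw [e1, e2] at h
        have h1 := h.1
        have h2 := h.2
        push_cast at h1 h2
        nlinarith
      · rw [e1, e2]
        push_cast
        refine ⟨⟨?_, ?_⟩, ?_, ?_⟩ <;> nlinarith

/-- For each generation-(n+1) trilateral, a generation-n trilateral is either
fully contained in it, or overlaps it properly; exactly two values of k give a
proper overlap of positive length, and those overlaps have length 2^n. -/
theorem overlap_structure (n m : ℕ) :
    {k : ℕ | ¬ T n k ⊆ T (n + 1) m ∧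
        (interior (T n k) ∩ interior (T (n + 1) m)).Nonempty}.ncard = 2 ∧
    ∀ k : ℕ, ¬ T n k ⊆ T (n + 1) m →
      (interior (T n k) ∩ interior (T (n + 1) m)).Nonempty →
      volume (T n k ∩ T (n + 1) m) = 2 ^ n := by
  have hc : (0:ℝ) < 2 ^ n := by positivity
  have hset : {k : ℕ | ¬ T n k ⊆ T (n + 1) m ∧
      (interior (T n k) ∩ interior (T (n + 1) m)).Nonempty} =
      {2 * m, 2 * m + 2} := by
    ext k
    simp only [Set.mem_setOf_eq, Set.mem_insert_iff, Set.mem_singleton_iff]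
    exact mem_key n m k
  constructor
  · rw [hset, Set.ncard_pair (by omega)]
  · intro k h1 h2
    have hk := (mem_key n m k).mp ⟨h1, h2⟩
    have e1 : (2:ℝ) ^ (n+1) = 2 * 2 ^ n := by ring
    have e2 : (2:ℝ) ^ (n+1+1) = 4 * 2 ^ n := by ring
    have hvol : ∀ a b : ℝ, a ≤ b → b - a = 2 ^ n →
        volume (Set.Icc a b) = 2 ^ n := by
      intro a b _ hab
      rw [Real.volume_Icc, hab, ENNReal.ofReal_pow (by norm_num : (0:ℝ) ≤ 2)]
      norm_num
    rw [T, T, Set.Icc_inter_Icc]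
    rcases hk with rfl | rfl
    · rw [max_eq_right, min_eq_left]
      · apply hvol
        · rw [xi_cast, xi_cast, e1, e2]; push_cast; nlinarith
        · rw [xi_cast, xi_cast, e1, e2]; push_cast; ring
      · rw [xi_cast, xi_cast, e1, e2]; push_cast; nlinarith
      · rw [xi_cast, xi_cast, e1, e2]; push_cast; nlinarith
    · rw [max_eq_left, min_eq_right]
      · apply hvol
        · rw [xi_cast, xi_cast, e1, e2]; push_cast; nlinarith
        · rw [xi_cast, xi_cast, e1, e2]; push_cast; ring
      · rw [xi_cast, xi_cast, e1, e2]; push_cast; nlinarith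
      · rw [xi_cast, xi_cast, e1, e2]; push_cast; nlinarith
end
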